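/- Let E be a symmetric Banach function space on I=[0,α) with the Fatou property and let x∈E with x*(∞)=0. If x is an LKM point and an H_g point, then for every sequence (x_n)⊆E such that x_n**→x** in Lebesgue measure and ‖x_n‖_E→‖x‖_E, one has ‖x_n*−x*‖_E→0. -/

import Mathlib

open MeasureTheory Filter Topology Set
open scoped ENNReal

noncomputable section

/-- Lebesgue measure restricted to the interval `I = [0, α)`, where `α : ℝ≥0∞`. -/
def muI (α : ℝ≥0∞) : Measure ℝ :=
  volume.restrict {s : ℝ | 0 ≤ s ∧ ENNReal.ofReal s < α}

/-- The distribution function `d_x(λ) = μ{s ∈ I : |x(s)| > λ}`. -/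
def distr (α : ℝ≥0∞) (x : ℝ → ℝ) (lam : ℝ) : ℝ≥0∞ :=
  muI α {s : ℝ | lam < |x s|}

/-- The decreasing rearrangement `x*(t) = inf{λ > 0 : d_x(λ) ≤ t}`. -/
def rearr (α : ℝ≥0∞) (x : ℝ → ℝ) (t : ℝ) : ℝ :=
  sInf {lam : ℝ | 0 < lam ∧ distr α x lam ≤ ENNReal.ofReal t}

/-- The maximal function `x**(t) = (1/t) ∫₀ᵗ x*(s) ds`. -/
def maxf (α : ℝ≥0∞) (x : ℝ → ℝ) (t : ℝ) : ℝ :=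
  (∫ s in Set.Ioc (0 : ℝ) t, rearr α x s) / t

/-- The Hardy–Littlewood–Pólya relation `x ≺ y`, i.e. `x**(t) ≤ y**(t)` for all `t > 0`. -/
def HLP (α : ℝ≥0∞) (x y : ℝ → ℝ) : Prop :=
  ∀ t : ℝ, 0 < t → maxf α x t ≤ maxf α y t

/-- `x*(∞) = 0`: automatic when `α ≠ ∞`, and `lim_{t→∞} x*(t) = 0` when `α = ∞`. -/
def rearrInftyZero (α : ℝ≥0∞) (x : ℝ → ℝ) : Prop :=
  α = ∞ → Tendsto (rearr α x) atTop (𝓝 0)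

/-- A symmetric Banach function space on `[0, α)` with the Fatou property. -/
structure SymmetricBFS (α : ℝ≥0∞) where
  /-- membership in the space `E` -/
  Mem : (ℝ → ℝ) → Prop
  /-- the norm of `E` -/
  N : (ℝ → ℝ) → ℝ
  mem_aemeasurable : ∀ ⦃x⦄, Mem x → AEMeasurable x (muI α)
  zero_mem : Mem 0
  add_mem : ∀ ⦃x y⦄, Mem x → Mem y → Mem (x + y)
  smul_mem : ∀ (c : ℝ) ⦃x⦄, Mem x → Mem (c • x)
  norm_nonneg' : ∀ x, 0 ≤ N x
  norm_zero' : N 0 = 0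
  norm_add_le : ∀ x y, N (x + y) ≤ N x + N y
  norm_smul' : ∀ (c : ℝ) (x : ℝ → ℝ), N (c • x) = |c| * N x
  norm_eq_zero_iff : ∀ ⦃x⦄, Mem x → (N x = 0 ↔ (∀ᵐ s ∂(muI α), x s = 0))
  /-- the ideal (Banach function space) property -/
  ideal : ∀ ⦃x y⦄, AEMeasurable x (muI α) → Mem y →
    (∀ᵐ s ∂(muI α), |x s| ≤ |y s|) → Mem x ∧ N x ≤ N y
  /-- there is a strictly positive element -/
  exists_strictPos : ∃ x, Mem x ∧ ∀ᵐ s ∂(muI α), 0 < x s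
  /-- norm completeness -/
  complete : ∀ u : ℕ → ℝ → ℝ, (∀ n, Mem (u n)) →
    (∀ ε : ℝ, 0 < ε → ∃ n₀ : ℕ, ∀ m n, n₀ ≤ m → n₀ ≤ n → N (u m - u n) < ε) →
    ∃ x, Mem x ∧ Tendsto (fun n => N (u n - x)) atTop (𝓝 0)
  /-- symmetry: equimeasurable functions have equal norms -/
  symmetric : ∀ ⦃x y⦄, AEMeasurable x (muI α) → Mem y →
    distr α x = distr α y → Mem x ∧ N x = N y
  /-- the Fatou property -/
  fatou : ∀ (u : ℕ → ℝ → ℝ) (x : ℝ → ℝ), (∀ n, Mem (u n)) →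
    AEMeasurable x (muI α) →
    (∀ n, ∀ᵐ s ∂(muI α), 0 ≤ u n s) →
    (∀ n, ∀ᵐ s ∂(muI α), u n s ≤ u (n + 1) s) →
    (∀ᵐ s ∂(muI α), Tendsto (fun n => u n s) atTop (𝓝 (x s))) →
    (∃ C : ℝ, ∀ n, N (u n) ≤ C) →
    Mem x ∧ Tendsto (fun n => N (u n)) atTop (𝓝 (N x))

variable {α : ℝ≥0∞}

/-- The fundamental function `φ(t) = ‖χ_{(0,t)}‖_E`. -/
def SymmetricBFS.fund (E : SymmetricBFS α) (t : ℝ) : ℝ :=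
  E.N (Set.indicator (Set.Ioo 0 t) fun _ => (1 : ℝ))

/-- `x` is a point of lower local uniform `K`-monotonicity (`LLUKM` point). -/
def SymmetricBFS.IsLLUKMPoint (E : SymmetricBFS α) (x : ℝ → ℝ) : Prop :=
  ∀ u : ℕ → ℝ → ℝ, (∀ n, E.Mem (u n)) → (∀ n, HLP α (u n) x) →
    Tendsto (fun n => E.N (u n)) atTop (𝓝 (E.N x)) →
    Tendsto (fun n => E.N (rearr α (u n) - rearr α x)) atTop (𝓝 0)

/-- `x` is a point of upper local uniform `K`-monotonicity (`ULUKM` point). -/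
def SymmetricBFS.IsULUKMPoint (E : SymmetricBFS α) (x : ℝ → ℝ) : Prop :=
  ∀ u : ℕ → ℝ → ℝ, (∀ n, E.Mem (u n)) → (∀ n, HLP α x (u n)) →
    Tendsto (fun n => E.N (u n)) atTop (𝓝 (E.N x)) →
    Tendsto (fun n => E.N (rearr α x - rearr α (u n))) atTop (𝓝 0)

/-- `x` is a point of lower `K`-monotonicity (`LKM` point). -/
def SymmetricBFS.IsLKMPoint (E : SymmetricBFS α) (x : ℝ → ℝ) : Prop :=
  ∀ y : ℝ → ℝ, E.Mem y → HLP α y x → rearr α y ≠ rearr α x → E.N y < E.N x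

/-- `x` is a point of order continuity. -/
def SymmetricBFS.IsOCPoint (E : SymmetricBFS α) (x : ℝ → ℝ) : Prop :=
  ∀ u : ℕ → ℝ → ℝ, (∀ n, E.Mem (u n)) →
    (∀ n, ∀ᵐ s ∂(muI α), 0 ≤ u n s ∧ u n s ≤ |x s|) →
    (∀ᵐ s ∂(muI α), Tendsto (fun n => u n s) atTop (𝓝 0)) →
    Tendsto (fun n => E.N (u n)) atTop (𝓝 0)

/-- `x` is a point of `K`-order continuity. -/
def SymmetricBFS.IsKOCPoint (E : SymmetricBFS α) (x : ℝ → ℝ) : Prop :=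
  ∀ u : ℕ → ℝ → ℝ, (∀ n, E.Mem (u n)) → (∀ n, HLP α (u n) x) →
    (∀ᵐ s ∂(muI α), Tendsto (fun n => rearr α (u n) s) atTop (𝓝 0)) →
    Tendsto (fun n => E.N (u n)) atTop (𝓝 0)

/-- `x` is an `H_g` point (Kadec–Klee point for global convergence in measure). -/
def SymmetricBFS.IsHgPoint (E : SymmetricBFS α) (x : ℝ → ℝ) : Prop :=
  ∀ u : ℕ → ℝ → ℝ, (∀ n, E.Mem (u n)) →
    TendstoInMeasure (muI α) u atTop x →
    Tendsto (fun n => E.N (u n)) atTop (𝓝 (E.N x)) →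
    Tendsto (fun n => E.N (u n - x)) atTop (𝓝 0)

/-- `x` is an `H_l` point (Kadec–Klee point for local convergence in measure). -/
def SymmetricBFS.IsHlPoint (E : SymmetricBFS α) (x : ℝ → ℝ) : Prop :=
  ∀ u : ℕ → ℝ → ℝ, (∀ n, E.Mem (u n)) →
    (∀ A : Set ℝ, muI α A < ∞ → TendstoInMeasure ((muI α).restrict A) u atTop x) →
    Tendsto (fun n => E.N (u n)) atTop (𝓝 (E.N x)) →
    Tendsto (fun n => E.N (u n - x)) atTop (𝓝 0)

/-- A nonnegative `x` is an `LLUM` point (point of lower local uniform monotonicity). -/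
def SymmetricBFS.IsLLUMPoint (E : SymmetricBFS α) (x : ℝ → ℝ) : Prop :=
  ∀ u : ℕ → ℝ → ℝ, (∀ n, E.Mem (u n)) →
    (∀ n, ∀ᵐ s ∂(muI α), 0 ≤ u n s ∧ u n s ≤ x s) →
    Tendsto (fun n => E.N (u n)) atTop (𝓝 (E.N x)) →
    Tendsto (fun n => E.N (u n - x)) atTop (𝓝 0)

/-- A nonnegative `x` is a `ULUM` point (point of upper local uniform monotonicity). -/
def SymmetricBFS.IsULUMPoint (E : SymmetricBFS α) (x : ℝ → ℝ) : Prop :=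
  ∀ u : ℕ → ℝ → ℝ, (∀ n, E.Mem (u n)) →
    (∀ n, ∀ᵐ s ∂(muI α), x s ≤ u n s) →
    Tendsto (fun n => E.N (u n)) atTop (𝓝 (E.N x)) →
    Tendsto (fun n => E.N (u n - x)) atTop (𝓝 0)

/-! Everything reduces to the decreasing rearrangements. Since `x` is an LKM point, `x*` is
locally integrable (otherwise `2x ≺ x`). Along a subsequence, `x_n** → x**` a.e.; since
`t x_n**(t) = ∫₀ᵗ x_n*` and the `x_n*` are nonincreasing, difference quotients of these integrals
squeeze `x_n*(t)`, so `x_n* → x*` at every continuity point of `x*`, hence in measure (`x*(∞) = 0`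
controls the tail when `α = ∞`). Finally, Ryff's measure-preserving map `σ`, with `|x| = x* ∘ σ`,
turns `x_n*` into `sign x · (x_n* ∘ σ)`, which converges in measure to `x` with the norms of `x_n`,
and whose distance to `x` is `‖x_n* − x*‖`; the `H_g` property of `x` concludes. -/

def baseSet (α : ℝ≥0∞) : Set ℝ := {s : ℝ | 0 ≤ s ∧ ENNReal.ofReal s < α}

lemma measurableSet_baseSet (α : ℝ≥0∞) : MeasurableSet (baseSet α) :=
  measurableSet_Ici.inter (ENNReal.measurable_ofReal measurableSet_Iio)

lemma muI_apply (A : Set ℝ) : muI α A = volume (A ∩ baseSet α) :=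
  Measure.restrict_apply' (measurableSet_baseSet α)

lemma muI_le_volume : muI α ≤ volume := Measure.restrict_le_self

instance : NullSingletonClass (muI α) := by unfold muI; infer_instance

lemma volume_baseSet (α : ℝ≥0∞) : volume (baseSet α) = α := by
  rcases eq_or_ne α ∞ with rfl | hα
  · have : baseSet ∞ = Ici 0 := by ext s; simp [baseSet]
    rw [this, Real.volume_Ici]
  · have : baseSet α = Ico 0 α.toReal := by
      ext s
      exact and_congr_right fun hs => ENNReal.ofReal_lt_iff_lt_toReal hs hα
    rw [this, Real.volume_Ico, sub_zero, ENNReal.ofReal_toReal hα]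

lemma muI_setOf_ofReal_lt (D : ℝ≥0∞) : muI α {t | ENNReal.ofReal t < D} = min D α := by
  have : {t : ℝ | ENNReal.ofReal t < D} ∩ baseSet α = baseSet (min D α) := by
    ext t
    simp only [baseSet, mem_inter_iff, mem_ofPred_eq, lt_min_iff]
    tauto
  rw [muI_apply, this, volume_baseSet]

lemma muI_univ : muI α univ = α := by
  simpa using muI_setOf_ofReal_lt (α := α) ∞

lemma muI_Iio (r : ℝ) : muI α (Iio r) = min (ENNReal.ofReal r) α := by
  rw [← muI_setOf_ofReal_lt, muI_apply, muI_apply]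
  congr 1
  ext t
  simp only [baseSet, mem_inter_iff, mem_Iio, mem_ofPred_eq]
  exact and_congr_left fun ht => (ENNReal.ofReal_lt_ofReal_iff_of_nonneg ht.1).symm

lemma ae_pos_muI : ∀ᵐ t ∂muI α, 0 < t := by
  filter_upwards [ae_restrict_mem (measurableSet_baseSet α),
    measure_eq_zero_iff_ae_notMem.1 (measure_singleton (μ := muI α) 0)] with t ht h0
  exact lt_of_le_of_ne ht.1 (Ne.symm h0)

lemma muI_Ioo_ne_zero {a b : ℝ} (ha : 0 ≤ a) (hab : a < b) (haα : ENNReal.ofReal a < α) :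
    muI α (Ioo a b) ≠ 0 := by
  have hIic : muI α (Iic a) = ENNReal.ofReal a := by
    rw [← measure_congr Iio_ae_eq_Iic, muI_Iio, min_eq_left haα.le]
  have hIoo : Ioo a b = Iio b \ Iic a := by ext; simp
  rw [hIoo, measure_sdiff (Iic_subset_Iio.2 hab) measurableSet_Iic.nullMeasurableSet
    (hIic ▸ ENNReal.ofReal_ne_top), hIic, muI_Iio]
  exact (tsub_pos_of_lt (lt_min (ENNReal.ofReal_lt_ofReal_iff'.2 ⟨hab, ha.trans_lt hab⟩) haα)).ne'

section Distribution

variable {x y : ℝ → ℝ} {lam t : ℝ}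

lemma distr_le_muI_univ : distr α x lam ≤ α :=
  (measure_mono (subset_univ _)).trans_eq muI_univ

lemma distr_anti : Antitone (distr α x) := fun _ _ hab =>
  measure_mono fun _ hs => lt_of_le_of_lt hab hs

lemma distr_of_neg (h : lam < 0) : distr α x lam = α := by
  refine (congrArg (muI α) (eq_univ_of_forall fun s => ?_)).trans muI_univ
  exact h.trans_le (abs_nonneg (x s))

lemma distr_congr_ae (h : x =ᵐ[muI α] y) : distr α x = distr α y := by
  funext lam
  refine measure_congr ?_
  filter_upwards [h] with s hs
  change (lam < |x s|) = (lam < |y s|)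
  rw [hs]

lemma distr_smul {c : ℝ} (hc : 0 < c) (x : ℝ → ℝ) (lam : ℝ) :
    distr α (c • x) lam = distr α x (lam / c) := by
  simp only [distr, Pi.smul_apply, smul_eq_mul, abs_mul, abs_of_pos hc, div_lt_iff₀' hc]

lemma distr_le_of_forall_gt {c : ℝ≥0∞} (h : ∀ μ, lam < μ → distr α x μ ≤ c) :
    distr α x lam ≤ c := by
  have hU : {s | lam < |x s|} = ⋃ n : ℕ, {s | lam + ((n : ℝ) + 1)⁻¹ < |x s|} := by
    ext s
    simp only [mem_ofPred_eq, mem_iUnion]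
    refine ⟨fun hs => ?_, fun ⟨n, hn⟩ => lt_of_le_of_lt (by simp; positivity) hn⟩
    obtain ⟨n, hn⟩ := exists_nat_one_div_lt (sub_pos.2 hs)
    exact ⟨n, by rw [one_div] at hn; linarith⟩
  have hmono : Monotone fun n : ℕ => {s | lam + ((n : ℝ) + 1)⁻¹ < |x s|} := fun n m hnm s hs =>
    lt_of_le_of_lt (b := lam + ((n : ℝ) + 1)⁻¹) (by gcongr) hs
  rw [distr, hU, hmono.measure_iUnion]
  exact iSup_le fun n => h _ (by simp; positivity)

lemma tendsto_distr_atTop (hx : AEMeasurable x (muI α)) {lam₀ : ℝ} (h : distr α x lam₀ ≠ ∞) :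
    Tendsto (distr α x) atTop (𝓝 0) := by
  have hInter : (⋂ lam : ℝ, {s | lam < |x s|}) = ∅ :=
    eq_empty_of_forall_notMem fun s hs => by simpa using mem_iInter.1 hs (|x s|)
  have := tendsto_measure_iInter_atTop (μ := muI α) (s := fun lam : ℝ => {s | lam < |x s|})
    (fun lam => nullMeasurableSet_lt aemeasurable_const hx.abs)
    (fun a b hab s (hs : b < |x s|) => lt_of_le_of_lt hab hs) ⟨lam₀, h⟩
  rwa [hInter, measure_empty] at this

end Distribution

section Rearrangement

open scoped Pointwise

variable {x y : ℝ → ℝ} {lam t : ℝ}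

def rearrSet (α : ℝ≥0∞) (x : ℝ → ℝ) (t : ℝ) : Set ℝ :=
  {lam : ℝ | 0 < lam ∧ distr α x lam ≤ ENNReal.ofReal t}

lemma rearr_eq_sInf : rearr α x t = sInf (rearrSet α x t) := rfl

lemma bddBelow_rearrSet : BddBelow (rearrSet α x t) := ⟨0, fun _ h => h.1.le⟩

lemma rearrSet_mono {s : ℝ} (hst : s ≤ t) : rearrSet α x s ⊆ rearrSet α x t :=
  fun _ h => ⟨h.1, h.2.trans (ENNReal.ofReal_le_ofReal hst)⟩

lemma rearr_nonneg (x : ℝ → ℝ) (t : ℝ) : 0 ≤ rearr α x t :=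
  Real.sInf_nonneg fun _ h => h.1.le

lemma rearr_congr (h : distr α x = distr α y) : rearr α x = rearr α y := by
  unfold rearr; rw [h]

lemma rearr_le_of_distr_le (hl : 0 < lam) (h : distr α x lam ≤ ENNReal.ofReal t) :
    rearr α x t ≤ lam :=
  csInf_le bddBelow_rearrSet ⟨hl, h⟩

lemma rearrSet_nonempty (hx : Tendsto (distr α x) atTop (𝓝 0)) (ht : 0 < t) :
    (rearrSet α x t).Nonempty := by
  obtain ⟨K, hK, hK0⟩ := ((hx.eventually (gt_mem_nhds (ENNReal.ofReal_pos.2 ht))).and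
    (eventually_gt_atTop 0)).exists
  exact ⟨K, hK0, hK.le⟩

lemma antitoneOn_rearr (hx : Tendsto (distr α x) atTop (𝓝 0)) :
    AntitoneOn (rearr α x) (Ioi 0) := fun _ hs _ _ hst =>
  csInf_le_csInf bddBelow_rearrSet (rearrSet_nonempty hx hs) (rearrSet_mono hst)

lemma distr_le_of_rearr_le (hne : (rearrSet α x t).Nonempty) (h : rearr α x t ≤ lam) :
    distr α x lam ≤ ENNReal.ofReal t :=
  distr_le_of_forall_gt fun μ hμ => by
    obtain ⟨l, hl, hlμ⟩ := exists_lt_of_csInf_lt hne (h.trans_lt hμ)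
    exact (distr_anti hlμ.le).trans hl.2

lemma lt_rearr_iff (hne : (rearrSet α x t).Nonempty) (hl : 0 < lam) :
    lam < rearr α x t ↔ ENNReal.ofReal t < distr α x lam := by
  rw [← not_le, ← not_le]
  exact ⟨mt (rearr_le_of_distr_le hl), mt (distr_le_of_rearr_le hne)⟩

lemma rearr_eq_zero_of_distr_le (h : distr α x 0 ≤ ENNReal.ofReal t) : rearr α x t = 0 :=
  le_antisymm (le_of_forall_pos_le_add fun ε hε =>
    (rearr_le_of_distr_le hε ((distr_anti hε.le).trans h)).trans_eq (zero_add ε).symm)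
    (rearr_nonneg x t)

lemma exists_pos_rearr_pos (hx : Tendsto (distr α x) atTop (𝓝 0)) (h0 : rearr α x ≠ 0) :
    ∃ t, 0 < t ∧ ENNReal.ofReal t < α ∧ 0 < rearr α x t := by
  have hd : 0 < distr α x 0 := pos_iff_ne_zero.2 fun hd =>
    h0 (funext fun t => rearr_eq_zero_of_distr_le (hd ▸ zero_le))
  obtain ⟨t, -, ht0, ht⟩ := ENNReal.lt_iff_exists_real_btwn.1 hd
  have htpos : 0 < t := ENNReal.ofReal_pos.1 ht0
  exact ⟨t, htpos, ht.trans_le distr_le_muI_univ, lt_of_not_ge fun hle =>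
    (distr_le_of_rearr_le (rearrSet_nonempty hx htpos) hle).not_gt ht⟩

lemma distr_ne_top_of_rearrInftyZero (hx : Tendsto (distr α x) atTop (𝓝 0))
    (hinf : rearrInftyZero α x) (hl : 0 < lam) : distr α x lam ≠ ∞ := by
  rcases ne_or_eq α ∞ with hα | hα
  · exact ne_top_of_le_ne_top hα distr_le_muI_univ
  obtain ⟨t, ht, ht0⟩ := (((hinf hα).eventually (gt_mem_nhds hl)).and
    (eventually_gt_atTop 0)).exists
  exact ne_top_of_le_ne_top ENNReal.ofReal_ne_top
    (distr_le_of_rearr_le (rearrSet_nonempty hx ht0) ht.le)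

lemma measurable_rearr (x : ℝ → ℝ) : Measurable (rearr α x) := by
  refine measurable_of_Ioi fun c => ?_
  rcases lt_or_ge c 0 with hc | hc
  · convert MeasurableSet.univ
    exact eq_univ_of_forall fun t => hc.trans_le (rearr_nonneg x t)
  refine OrdConnected.measurableSet ⟨fun t₁ h₁ t₂ h₂ t ht => ?_⟩
  have hne : (rearrSet α x t₁).Nonempty := by
    by_contra h
    rw [not_nonempty_iff_eq_empty] at h
    rw [mem_preimage, mem_Ioi, rearr_eq_sInf, h, Real.sInf_empty] at h₁
    exact h₁.not_ge hc
  exact lt_of_lt_of_le h₂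
    (csInf_le_csInf bddBelow_rearrSet (hne.mono (rearrSet_mono ht.1)) (rearrSet_mono ht.2))

lemma muI_lt_rearr (hx : Tendsto (distr α x) atTop (𝓝 0)) (hl : 0 < lam) :
    muI α {t | lam < rearr α x t} = distr α x lam := by
  have : {t | lam < rearr α x t} =ᵐ[muI α] {t | ENNReal.ofReal t < distr α x lam} := by
    filter_upwards [ae_pos_muI] with t ht
    exact propext (lt_rearr_iff (rearrSet_nonempty hx ht) hl)
  rw [measure_congr this, muI_setOf_ofReal_lt, min_eq_left distr_le_muI_univ]

lemma distr_rearr (hx : Tendsto (distr α x) atTop (𝓝 0)) :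
    distr α (rearr α x) = distr α x := by
  have hpos : ∀ lam, 0 < lam → distr α (rearr α x) lam = distr α x lam := fun lam hl => by
    simp only [distr, abs_of_nonneg (rearr_nonneg x _)]
    exact muI_lt_rearr hx hl
  funext lam
  rcases lt_trichotomy lam 0 with h | rfl | h
  · rw [distr_of_neg h, distr_of_neg h]
  · exact le_antisymm
      (distr_le_of_forall_gt fun μ hμ => (hpos μ hμ).trans_le (distr_anti hμ.le))
      (distr_le_of_forall_gt fun μ hμ => (hpos μ hμ).symm.trans_le (distr_anti hμ.le))
  · exact hpos lam h

lemma rearr_smul {c : ℝ} (hc : 0 < c) (x : ℝ → ℝ) (t : ℝ) :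
    rearr α (c • x) t = c * rearr α x t := by
  have : rearrSet α (c • x) t = c • rearrSet α x t := by
    ext lam
    rw [mem_smul_set_iff_inv_smul_mem₀ hc.ne']
    simp only [rearrSet, mem_ofPred_eq, smul_eq_mul, distr_smul hc, inv_mul_eq_div,
      div_pos_iff_of_pos_right hc]
  rw [rearr_eq_sInf, this, Real.sInf_smul_of_nonneg hc.le, smul_eq_mul, rearr_eq_sInf]

end Rearrangement

section AntitoneOnIoi

variable {g : ℝ → ℝ} {v : ℕ → ℝ → ℝ} {a p q t : ℝ}

lemma AntitoneOn.integrableOn_Ioc (hg : AntitoneOn g (Ioi 0)) (hp : 0 < p) :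
    IntegrableOn g (Ioc p q) :=
  ((hg.mono fun _ hu => hp.trans_le hu.1).integrableOn_isCompact isCompact_Icc).mono_set
    Ioc_subset_Icc_self

lemma AntitoneOn.integrableOn_Ioc_zero (hg : AntitoneOn g (Ioi 0)) (ha : 0 < a)
    (h : IntegrableOn g (Ioc 0 a)) (q : ℝ) : IntegrableOn g (Ioc 0 q) :=
  (h.union (hg.integrableOn_Ioc ha)).mono_set fun u hu =>
    (le_or_gt u a).imp (fun h' => ⟨hu.1, h'⟩) fun h' => ⟨h', hu.2⟩

lemma AntitoneOn.setIntegral_Ioc_le (hg : AntitoneOn g (Ioi 0)) (hp : 0 < p) (hpq : p ≤ q) :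
    ∫ u in Ioc p q, g u ≤ (q - p) * g p := by
  calc ∫ u in Ioc p q, g u ≤ ∫ _ in Ioc p q, g p :=
        setIntegral_mono_on (hg.integrableOn_Ioc hp) (integrableOn_const measure_Ioc_lt_top.ne)
          measurableSet_Ioc fun u hu => hg hp (hp.trans hu.1) hu.1.le
    _ = (q - p) * g p := by rw [setIntegral_const, Real.volume_real_Ioc_of_le hpq, smul_eq_mul]

lemma AntitoneOn.mul_le_setIntegral_Ioc (hg : AntitoneOn g (Ioi 0)) (hp : 0 < p) (hpq : p ≤ q) :
    (q - p) * g q ≤ ∫ u in Ioc p q, g u := by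
  calc (q - p) * g q = ∫ _ in Ioc p q, g q := by
        rw [setIntegral_const, Real.volume_real_Ioc_of_le hpq, smul_eq_mul]
    _ ≤ ∫ u in Ioc p q, g u :=
        setIntegral_mono_on (integrableOn_const measure_Ioc_lt_top.ne) (hg.integrableOn_Ioc hp)
          measurableSet_Ioc fun u hu => hg (hp.trans hu.1) (hp.trans_le hpq) hu.2

lemma eventually_lt_of_tendsto_setIntegral_Ioc (hv : ∀ n, AntitoneOn (v n) (Ioi 0))
    (hg : AntitoneOn g (Ioi 0)) (hp : 0 < p) (hpq : p < q) (hqt : q ≤ t)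
    (hconv : Tendsto (fun n => ∫ u in Ioc p q, v n u) atTop (𝓝 (∫ u in Ioc p q, g u)))
    {c : ℝ} (hc : g p < c) : ∀ᶠ n in atTop, v n t < c := by
  have hlim : ∫ u in Ioc p q, g u < (q - p) * c :=
    (hg.setIntegral_Ioc_le hp hpq.le).trans_lt (mul_lt_mul_of_pos_left hc (sub_pos.2 hpq))
  filter_upwards [hconv.eventually_lt_const hlim] with n hn
  have hq : v n q < c := lt_of_mul_lt_mul_left
    (((hv n).mul_le_setIntegral_Ioc hp hpq.le).trans_lt hn) (sub_pos.2 hpq).le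
  exact (hv n (hp.trans hpq) (hp.trans_le (hpq.le.trans hqt)) hqt).trans_lt hq

lemma eventually_gt_of_tendsto_setIntegral_Ioc (hv : ∀ n, AntitoneOn (v n) (Ioi 0))
    (hg : AntitoneOn g (Ioi 0)) (ht : 0 < t) (htp : t ≤ p) (hpq : p < q)
    (hconv : Tendsto (fun n => ∫ u in Ioc p q, v n u) atTop (𝓝 (∫ u in Ioc p q, g u)))
    {c : ℝ} (hc : c < g q) : ∀ᶠ n in atTop, c < v n t := by
  have hp : 0 < p := ht.trans_le htp
  have hlim : (q - p) * c < ∫ u in Ioc p q, g u :=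
    (mul_lt_mul_of_pos_left hc (sub_pos.2 hpq)).trans_le (hg.mul_le_setIntegral_Ioc hp hpq.le)
  filter_upwards [hconv.eventually_const_lt hlim] with n hn
  have hp' : c < v n p := lt_of_mul_lt_mul_left
    (hn.trans_le ((hv n).setIntegral_Ioc_le hp hpq.le)) (sub_pos.2 hpq).le
  exact hp'.trans_le (hv n ht hp htp)

/-- The average of an antitone function over `(p, q]` lies between its values at `q` and `p`. -/
lemma tendsto_of_tendsto_setIntegral_Ioc {D : Set ℝ} (hv : ∀ n, AntitoneOn (v n) (Ioi 0))
    (hg : AntitoneOn g (Ioi 0))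
    (hconv : ∀ p ∈ D, ∀ q ∈ D, p < q →
      Tendsto (fun n => ∫ u in Ioc p q, v n u) atTop (𝓝 (∫ u in Ioc p q, g u)))
    (ht : 0 < t) (hDl : ∀ a < t, (D ∩ Ioo a t).Nonempty) (hDr : ∀ b > t, (D ∩ Ioo t b).Nonempty)
    (hcont : ContinuousAt g t) : Tendsto (fun n => v n t) atTop (𝓝 (g t)) := by
  refine tendsto_order.2 ⟨fun c hc => ?_, fun c hc => ?_⟩
  · obtain ⟨l, u, ⟨hlt, htu⟩, hsub⟩ :=
      mem_nhds_iff_exists_Ioo_subset.1 (hcont.eventually (lt_mem_nhds hc))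
    obtain ⟨q, hqD, hq⟩ := hDr u htu
    obtain ⟨p, hpD, hp⟩ := hDr q hq.1
    exact eventually_gt_of_tendsto_setIntegral_Ioc hv hg ht hp.1.le hp.2
      (hconv p hpD q hqD hp.2) (hsub ⟨hlt.trans hq.1, hq.2⟩)
  · obtain ⟨l, u, ⟨hlt, htu⟩, hsub⟩ :=
      mem_nhds_iff_exists_Ioo_subset.1 (hcont.eventually (gt_mem_nhds hc))
    obtain ⟨p, hpD, hp⟩ := hDl (max l 0) (max_lt hlt ht)
    obtain ⟨q, hqD, hq⟩ := hDl p hp.2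
    exact eventually_lt_of_tendsto_setIntegral_Ioc hv hg ((le_max_right l 0).trans_lt hp.1)
      hq.1 hq.2.le (hconv p hpD q hqD hq.1)
      (hsub ⟨(le_max_left l 0).trans_lt hp.1, hp.2.trans htu⟩)

end AntitoneOnIoi

section ConvergenceInMeasure

variable {g : ℝ → ℝ} {v : ℕ → ℝ → ℝ}

lemma frequently_mem_Ioo_muI {a b : ℝ} (ha : 0 ≤ a) (hab : a < b)
    (haα : ENNReal.ofReal a < α) : ∃ᵐ t ∂muI α, t ∈ Ioo a b :=
  frequently_ae_iff.2 (muI_Ioo_ne_zero ha hab haα)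

lemma ae_continuousAt_of_antitoneOn (hg : AntitoneOn g (Ioi 0)) :
    ∀ᵐ t ∂muI α, ContinuousAt g t := by
  have hnull : volume {t | t ∈ Ioi 0 ∧ ¬ContinuousWithinAt g (Ioi 0) t} = 0 :=
    hg.countable_not_continuousWithinAt.measure_zero _
  filter_upwards [ae_pos_muI, (Measure.absolutelyContinuous_of_le muI_le_volume).ae_le
    (measure_eq_zero_iff_ae_notMem.1 hnull)] with t ht hc
  by_contra h
  exact hc ⟨ht, fun hw => h (hw.continuousAt (Ioi_mem_nhds ht))⟩

/-- On an infinite interval, the tails are controlled uniformly by the value at one point `T`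
where `g T` is small, which reduces the claim to the finite measure `muI ∞` on `(-∞, T]`. -/
lemma tendstoInMeasure_of_tendsto_of_continuousAt (hvm : ∀ n, Measurable (v n))
    (hv0 : ∀ n u, 0 ≤ v n u) (hv : ∀ n, AntitoneOn (v n) (Ioi 0))
    (hg0 : ∀ u, 0 ≤ g u) (hg : AntitoneOn g (Ioi 0))
    (hptw : ∀ t, 0 < t → ENNReal.ofReal t < α → ContinuousAt g t →
      Tendsto (fun n => v n t) atTop (𝓝 (g t)))
    (htail : α = ∞ → Tendsto g atTop (𝓝 0)) :
    TendstoInMeasure (muI α) v atTop g := by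
  have hae : ∀ᵐ t ∂muI α, Tendsto (fun n => v n t) atTop (𝓝 (g t)) := by
    filter_upwards [ae_pos_muI, ae_restrict_mem (measurableSet_baseSet α),
      ae_continuousAt_of_antitoneOn hg] with t ht htα hc
    exact hptw t ht htα.2 hc
  rcases ne_or_eq α ∞ with hα | rfl
  · have : IsFiniteMeasure (muI α) := ⟨by rw [muI_univ]; exact hα.lt_top⟩
    exact tendstoInMeasure_of_tendsto_ae (fun n => (hvm n).aestronglyMeasurable) hae
  rw [tendstoInMeasure_iff_dist]
  intro ε hε
  obtain ⟨T, hT, hTε, hTconv⟩ :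
      ∃ T, 0 < T ∧ g T < ε ∧ Tendsto (fun n => v n T) atTop (𝓝 (g T)) := by
    obtain ⟨T₀, hT₀⟩ := eventually_atTop.1 ((htail rfl).eventually (gt_mem_nhds hε))
    obtain ⟨T, hT, hTc⟩ := ((frequently_mem_Ioo_muI (le_max_right T₀ 0)
      (lt_add_one _) ENNReal.ofReal_lt_top).and_eventually hae).exists
    exact ⟨T, (le_max_right _ _).trans_lt hT.1, hT₀ T ((le_max_left _ _).trans hT.1.le), hTc⟩
  have : IsFiniteMeasure ((muI ∞).restrict (Iic T)) := ⟨by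
    rw [Measure.restrict_apply_univ, ← measure_congr Iio_ae_eq_Iic, muI_Iio]
    exact min_lt_of_left_lt ENNReal.ofReal_lt_top⟩
  have hfin := tendstoInMeasure_iff_dist.1 (tendstoInMeasure_of_tendsto_ae
    (μ := (muI ∞).restrict (Iic T)) (fun n => (hvm n).aestronglyMeasurable)
    (ae_restrict_of_ae hae)) ε hε
  refine tendsto_of_tendsto_of_tendsto_of_le_of_le' tendsto_const_nhds hfin
    (Eventually.of_forall fun n => zero_le) ?_
  filter_upwards [hTconv.eventually (gt_mem_nhds hTε)] with n hn
  rw [Measure.restrict_apply' measurableSet_Iic]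
  refine measure_mono fun s (hs : ε ≤ dist (v n s) (g s)) => ⟨hs, ?_⟩
  by_contra hTs
  rw [mem_Iic, not_le] at hTs
  rw [Real.dist_eq] at hs
  refine hs.not_gt ?_
  exact abs_sub_lt_of_nonneg_of_lt (hv0 n s) ((hv n hT (hT.trans hTs) hTs.le).trans_lt hn)
    (hg0 s) ((hg hT (hT.trans hTs) hTs.le).trans_lt hTε)

end ConvergenceInMeasure

section Averages

variable {g f : ℝ → ℝ} {v : ℕ → ℝ → ℝ} {p q : ℝ}

lemma setIntegral_Ioc_zero_sub (hf : IntegrableOn f (Ioc 0 q)) (hp : 0 ≤ p) (hpq : p ≤ q) :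
    (∫ u in Ioc 0 q, f u) - ∫ u in Ioc 0 p, f u = ∫ u in Ioc p q, f u := by
  rw [← Ioc_union_Ioc_eq_Ioc hp hpq] at hf ⊢
  rw [setIntegral_union (Ioc_disjoint_Ioc_of_le le_rfl) measurableSet_Ioc
    (hf.mono_set subset_union_left) (hf.mono_set subset_union_right), add_sub_cancel_left]

lemma setIntegral_Ioc_zero_pos (hg0 : ∀ u, 0 ≤ g u) (hg : AntitoneOn g (Ioi 0))
    (hgint : IntegrableOn g (Ioc 0 q)) (hq : 0 < q) (hgq : 0 < g q) :
    0 < ∫ u in Ioc 0 q, g u :=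
  calc 0 < (q - q / 2) * g q := mul_pos (by linarith) hgq
    _ ≤ ∫ u in Ioc (q / 2) q, g u := hg.mul_le_setIntegral_Ioc (half_pos hq) (half_le_self hq.le)
    _ ≤ ∫ u in Ioc 0 q, g u := setIntegral_mono_set hgint (Eventually.of_forall hg0)
        (Ioc_subset_Ioc_left (half_pos hq).le).eventuallyLE

lemma tendstoInMeasure_of_ae_tendsto_average (hvm : ∀ n, Measurable (v n))
    (hv0 : ∀ n u, 0 ≤ v n u) (hv : ∀ n, AntitoneOn (v n) (Ioi 0))
    (hg0 : ∀ u, 0 ≤ g u) (hg : AntitoneOn g (Ioi 0)) (hgint : ∀ T, IntegrableOn g (Ioc 0 T))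
    {t₁ : ℝ} (ht₁ : 0 < t₁) (ht₁α : ENNReal.ofReal t₁ < α) (hgt₁ : 0 < g t₁)
    (hae : ∀ᵐ t ∂muI α, Tendsto (fun n => (∫ u in Ioc 0 t, v n u) / t) atTop
      (𝓝 ((∫ u in Ioc 0 t, g u) / t)))
    (htail : α = ∞ → Tendsto g atTop (𝓝 0)) :
    TendstoInMeasure (muI α) v atTop g := by
  set D := {t | 0 < t ∧ ENNReal.ofReal t < α ∧
    Tendsto (fun n => ∫ u in Ioc 0 t, v n u) atTop (𝓝 (∫ u in Ioc 0 t, g u))}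
  have hDae : ∀ᵐ t ∂muI α, t ∈ D := by
    filter_upwards [hae, ae_pos_muI, ae_restrict_mem (measurableSet_baseSet α)] with t h ht htα
    refine ⟨ht, htα.2, ?_⟩
    simpa only [div_mul_cancel₀ _ ht.ne'] using h.mul_const t
  have hD {a b : ℝ} (ha : 0 ≤ a) (hab : a < b) (haα : ENNReal.ofReal a < α) :
      (D ∩ Ioo a b).Nonempty :=
    (hDae.and_frequently (frequently_mem_Ioo_muI ha hab haα)).exists
  obtain ⟨t₀, ⟨ht₀, -, ht₀conv⟩, -, ht₀t₁⟩ := hD le_rfl ht₁ (by simpa using ht₁α.pos)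
  -- a nonzero limit of `∫₀^{t₀} v n` forces integrability, as `integral_undef` gives `0` otherwise
  have hvint : ∀ᶠ n in atTop, ∀ T, IntegrableOn (v n) (Ioc 0 T) := by
    filter_upwards [ht₀conv.eventually_ne (setIntegral_Ioc_zero_pos hg0 hg (hgint t₀) ht₀
      (hgt₁.trans_le (hg ht₀ ht₁ ht₀t₁.le))).ne'] with n hn
    exact (hv n).integrableOn_Ioc_zero ht₀ (by_contra fun h => hn (integral_undef h))
  have hconv : ∀ p ∈ D, ∀ q ∈ D, p < q →
      Tendsto (fun n => ∫ u in Ioc p q, v n u) atTop (𝓝 (∫ u in Ioc p q, g u)) := by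
    rintro p ⟨hp, -, hpconv⟩ q ⟨-, -, hqconv⟩ hpq
    rw [← setIntegral_Ioc_zero_sub (hgint q) hp.le hpq.le]
    refine (hqconv.sub hpconv).congr' ?_
    filter_upwards [hvint] with n hn
    exact setIntegral_Ioc_zero_sub (hn q) hp.le hpq.le
  refine tendstoInMeasure_of_tendsto_of_continuousAt hvm hv0 hv hg0 hg
    (fun t ht htα hcont => ?_) htail
  refine tendsto_of_tendsto_setIntegral_Ioc hv hg hconv ht (fun a hat => ?_)
    (fun b htb => hD ht.le htb htα) hcont
  exact (hD (le_max_right a 0) (max_lt hat ht) ((ENNReal.ofReal_le_ofReal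
    (max_le hat.le ht.le)).trans_lt htα)).mono (inter_subset_inter_right _
    (Ioo_subset_Ioo_left (le_max_left a 0)))

end Averages

namespace SymmetricBFS

variable (E : SymmetricBFS α) {x : ℝ → ℝ}

/-- Otherwise `x` and `2 • x` would be equimeasurable, forcing `‖x‖ = 0`. -/
lemma exists_distr_ne_top (hx : E.Mem x) : ∃ lam, distr α x lam ≠ ∞ := by
  by_contra! h
  have hdistr : distr α ((2 : ℝ) • x) = distr α x :=
    funext fun lam => by rw [distr_smul two_pos, h, h]
  have hN := (E.symmetric ((E.mem_aemeasurable hx).const_smul (2 : ℝ)) hx hdistr).2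
  rw [E.norm_smul', abs_two] at hN
  have hx0 : x =ᵐ[muI α] 0 := (E.norm_eq_zero_iff hx).1 (by linarith)
  have := h 0
  rw [distr_congr_ae hx0] at this
  simp [distr] at this

lemma tendsto_distr (hx : E.Mem x) : Tendsto (distr α x) atTop (𝓝 0) :=
  tendsto_distr_atTop (E.mem_aemeasurable hx) (E.exists_distr_ne_top hx).choose_spec

lemma mem_rearr (hx : E.Mem x) : E.Mem (rearr α x) ∧ E.N (rearr α x) = E.N x :=
  E.symmetric (measurable_rearr x).aemeasurable hx (distr_rearr (E.tendsto_distr hx))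

/-- Otherwise the Bochner integrals defining `x**` and `(2x)**` are all `0`, so `2x ≺ x` while
`‖2x‖ > ‖x‖`. -/
lemma IsLKMPoint.integrableOn_rearr (hx : E.Mem x) (hLKM : E.IsLKMPoint x)
    (h0 : rearr α x ≠ 0) (T : ℝ) : IntegrableOn (rearr α x) (Ioc 0 T) := by
  by_contra hT
  have hnot : ∀ t, 0 < t → ¬IntegrableOn (rearr α x) (Ioc 0 t) := fun t ht h =>
    hT ((antitoneOn_rearr (E.tendsto_distr hx)).integrableOn_Ioc_zero ht h T)
  have hrearr2 : rearr α ((2 : ℝ) • x) = (2 : ℝ) • rearr α x := funext (rearr_smul two_pos x)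
  have hHLP : HLP α ((2 : ℝ) • x) x := fun t ht => by
    rw [maxf, maxf, hrearr2, integral_undef (hnot t ht),
      integral_undef ((integrable_smul_iff two_ne_zero _).not.2 (hnot t ht))]
  have hne : rearr α ((2 : ℝ) • x) ≠ rearr α x := by
    obtain ⟨t, ht⟩ := Function.ne_iff.1 h0
    refine fun h => ht ?_
    have := congrFun h t
    rw [hrearr2, Pi.smul_apply, smul_eq_mul] at this
    simp only [Pi.zero_apply]
    linarith
  have := hLKM _ (E.smul_mem 2 hx) hHLP hne
  rw [E.norm_smul', abs_two] at this
  linarith [E.norm_nonneg' x]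

lemma tendstoInMeasure_rearr_of_ae_tendsto_maxf (hx : E.Mem x) (hinf : rearrInftyZero α x)
    (hLKM : E.IsLKMPoint x) (h0 : rearr α x ≠ 0) {u : ℕ → ℝ → ℝ} (hu : ∀ n, E.Mem (u n))
    (hae : ∀ᵐ t ∂muI α, Tendsto (fun n => maxf α (u n) t) atTop (𝓝 (maxf α x t))) :
    TendstoInMeasure (muI α) (fun n => rearr α (u n)) atTop (rearr α x) := by
  obtain ⟨t₁, ht₁, ht₁α, hpos⟩ := exists_pos_rearr_pos (E.tendsto_distr hx) h0
  exact tendstoInMeasure_of_ae_tendsto_average (fun n => measurable_rearr _)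
    (fun n => rearr_nonneg _) (fun n => antitoneOn_rearr (E.tendsto_distr (hu n)))
    (rearr_nonneg x) (antitoneOn_rearr (E.tendsto_distr hx))
    (IsLKMPoint.integrableOn_rearr E hx hLKM h0) ht₁ ht₁α hpos hae hinf

end SymmetricBFS

section LevelRank

variable {B : Set ℝ}

lemma muI_inter_Iio_le_add (s t : ℝ) :
    muI α (B ∩ Iio t) ≤ muI α (B ∩ Iio s) + ENNReal.ofReal (t - s) :=
  calc muI α (B ∩ Iio t) ≤ muI α (B ∩ Iio s ∪ Ico s t) :=
        measure_mono fun u hu => (lt_or_ge u s).imp (fun h => ⟨hu.1, h⟩) fun h => ⟨h, hu.2⟩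
    _ ≤ muI α (B ∩ Iio s) + muI α (Ico s t) := measure_union_le _ _
    _ ≤ _ := add_le_add le_rfl ((muI_le_volume _).trans_eq Real.volume_Ico)

lemma monotone_muI_inter_Iio : Monotone fun s => muI α (B ∩ Iio s) :=
  fun _ _ hst => measure_mono (inter_subset_inter_right _ (Iio_subset_Iio hst))

/-- `F s = muI (B ∩ (-∞, s))` is nondecreasing and 1-Lipschitz, so it equals `c` at
`sup {F < c}`. -/
lemma muI_inter_setOf_muI_inter_Iio_lt {c : ℝ≥0∞} (hc : c ≤ muI α B) :
    muI α (B ∩ {s | muI α (B ∩ Iio s) < c}) = c := by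
  set F : ℝ → ℝ≥0∞ := fun s => muI α (B ∩ Iio s)
  rcases eq_or_ne c 0 with rfl | hc0
  · simp
  set U := {s | F s < c}
  by_cases hU : ∀ s, s ∈ U
  · rw [inter_eq_left.2 fun s _ => hU s]
    refine le_antisymm ?_ hc
    have hB : B = ⋃ n : ℕ, B ∩ Iio (n : ℝ) := by
      rw [← inter_iUnion, eq_comm, inter_eq_left]
      exact fun s _ => mem_iUnion.2 (exists_nat_gt s)
    rw [hB, Monotone.measure_iUnion fun n m h =>
      inter_subset_inter_right _ (Iio_subset_Iio (Nat.cast_le.2 h))]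
    exact iSup_le fun n => (hU n).le
  obtain ⟨s₁, hs₁⟩ := not_forall.1 hU
  have hbdd : BddAbove U :=
    ⟨s₁, fun s hs => le_of_not_gt fun h => hs₁ ((monotone_muI_inter_Iio h.le).trans_lt hs)⟩
  have hUne : U.Nonempty := ⟨0, show F 0 < c from
    (measure_mono_null inter_subset_right (by simp [muI_Iio])).trans_lt (pos_iff_ne_zero.2 hc0)⟩
  set m := sSup U
  have hlt : ∀ s < m, s ∈ U := fun s hs => by
    obtain ⟨u, hu, hsu⟩ := exists_lt_of_lt_csSup hUne hs
    exact (monotone_muI_inter_Iio hsu.le).trans_lt hu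
  have hFm : F m = c := by
    refine le_antisymm (ENNReal.le_of_forall_pos_le_add fun ε hε _ => ?_)
      (ENNReal.le_of_forall_pos_le_add fun ε hε _ => ?_)
    · calc F m ≤ F (m - ε) + ENNReal.ofReal (m - (m - ε)) := muI_inter_Iio_le_add _ _
        _ ≤ c + ε := add_le_add (hlt _ (by simpa using hε)).le (by simp)
    · calc c ≤ F (m + ε) := not_lt.1 fun h => (lt_add_of_pos_right m hε).not_ge (le_csSup hbdd h)
        _ ≤ F m + ENNReal.ofReal (m + ε - m) := muI_inter_Iio_le_add _ _
        _ = F m + ε := by simp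
  refine le_antisymm ?_ ?_
  · calc muI α (B ∩ U) ≤ muI α (B ∩ Iic m) :=
          measure_mono (inter_subset_inter_right _ fun s hs => le_csSup hbdd hs)
      _ = c := (measure_congr ((ae_eq_refl B).inter Iio_ae_eq_Iic).symm).trans hFm
  · exact hFm.symm.le.trans (measure_mono (inter_subset_inter_right _ hlt))

lemma muI_diff_setOf_muI_inter_Iio_lt (hfin : muI α B ≠ ∞) :
    muI α (B \ {s | muI α (B ∩ Iio s) < muI α B}) = 0 := by
  have := measure_inter_add_sdiff (μ := muI α) (t := {s | muI α (B ∩ Iio s) < muI α B}) B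
    ((monotone_muI_inter_Iio (α := α) (B := B)).measurable (measurableSet_Iio (a := muI α B)))
  rw [muI_inter_setOf_muI_inter_Iio_lt le_rfl] at this
  exact (ENNReal.add_right_inj hfin).1 (this.trans (add_zero _).symm)

end LevelRank

lemma MeasureTheory.Measure.ext_of_Iio_of_ne_top {μ ν : Measure ℝ} (hμ : ∀ r, μ (Iio r) ≠ ∞)
    (h : ∀ r, μ (Iio r) = ν (Iio r)) : μ = ν := by
  refine Measure.ext_of_Ico' μ ν
    (fun a b _ => ne_top_of_le_ne_top (hμ b) (measure_mono Ico_subset_Iio_self)) fun a b hab => ?_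
  have hIco : Ico a b = Iio b \ Iio a := by ext; simp
  rw [hIco, measure_sdiff (Iio_subset_Iio hab.le) measurableSet_Iio.nullMeasurableSet (hμ a),
    measure_sdiff (Iio_subset_Iio hab.le) measurableSet_Iio.nullMeasurableSet (h a ▸ hμ a), h, h]

section Ryff

variable {X : ℝ → ℝ} {s : ℝ}

def levelRank (α : ℝ≥0∞) (X : ℝ → ℝ) (s : ℝ) : ℝ≥0∞ :=
  muI α ({u | |X u| = |X s|} ∩ Iio s)

/-- Ryff's map: `X* ∘ ryffMap = |X|` a.e., and `ryffMap` carries `muI` (restricted to where it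
is finite) to `muI`. -/
def ryffMap (α : ℝ≥0∞) (X : ℝ → ℝ) (s : ℝ) : ℝ≥0∞ :=
  distr α X |X s| + levelRank α X s

lemma muI_inter_Iio_lt_top (B : Set ℝ) (s : ℝ) : muI α (B ∩ Iio s) < ∞ :=
  (measure_mono inter_subset_right).trans_lt
    ((muI_Iio s).trans_lt (min_lt_of_left_lt ENNReal.ofReal_lt_top))

lemma muI_le_abs (hX : Measurable X) (a : ℝ) :
    muI α {u | a ≤ |X u|} = distr α X a + muI α {u | |X u| = a} := by
  have : {u | a ≤ |X u|} = {u | a < |X u|} ∪ {u | |X u| = a} := by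
    ext u
    simp only [mem_ofPred_eq, mem_union, le_iff_lt_or_eq, eq_comm]
  rw [this, measure_union (disjoint_left.2 fun u h1 h2 => h1.ne' h2)
    (show MeasurableSet {u | |X u| = a} from hX.abs (measurableSet_singleton a))]
  rfl

lemma distr_le_ryffMap : distr α X |X s| ≤ ryffMap α X s := le_self_add

lemma ryffMap_le (hX : Measurable X) : ryffMap α X s ≤ muI α {u | |X s| ≤ |X u|} := by
  rw [muI_le_abs hX]
  exact add_le_add le_rfl (measure_mono inter_subset_left)

lemma ryffMap_ne_top (hdfin : ∀ lam, 0 < lam → distr α X lam ≠ ∞) (hs : 0 < |X s|) :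
    ryffMap α X s ≠ ∞ :=
  ENNReal.add_ne_top.2 ⟨hdfin _ hs, (muI_inter_Iio_lt_top _ s).ne⟩

instance : SFinite (muI α) := by unfold muI; infer_instance

lemma measurable_ryffMap (hX : Measurable X) : Measurable (ryffMap α X) := by
  have hE : MeasurableSet {q : (ℝ × ℝ) × ℝ | |X q.2| = q.1.1 ∧ q.2 < q.1.2} :=
    (measurableSet_eq_fun (hX.comp measurable_snd).abs measurable_fst.fst).inter
      (measurableSet_lt measurable_snd measurable_fst.snd)
  exact (distr_anti.measurable.comp hX.abs).add
    ((measurable_measure_prodMk_left hE).comp (hX.abs.prodMk measurable_id))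

lemma ae_levelRank_lt (hX : Measurable X) :
    ∀ᵐ s ∂muI α, muI α {u | |X u| = |X s|} ≠ 0 →
      levelRank α X s < muI α {u | |X u| = |X s|} := by
  have hcount : {a : ℝ | 0 < muI α {u | |X u| = a}}.Countable :=
    Measure.countable_meas_pos_of_disjoint_iUnion₀
      (fun a => (hX.abs (measurableSet_singleton a)).nullMeasurableSet)
      fun a b hab => Disjoint.aedisjoint (disjoint_left.2 fun u h1 h2 => hab (h1.symm.trans h2))
  have hnull : muI α (⋃ a ∈ {a : ℝ | 0 < muI α {u | |X u| = a}}, {u | |X u| = a} \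
      {s | muI α ({u | |X u| = a} ∩ Iio s) < muI α {u | |X u| = a}}) = 0 := by
    refine (measure_biUnion_null_iff hcount).2 fun a _ => ?_
    rcases eq_or_ne (muI α {u | |X u| = a}) ∞ with h | h
    · exact measure_mono_null (fun s hs => (hs.2 (h ▸ muI_inter_Iio_lt_top _ s)).elim)
        measure_empty
    · exact muI_diff_setOf_muI_inter_Iio_lt h
  filter_upwards [measure_eq_zero_iff_ae_notMem.1 hnull] with s hs hpos
  by_contra hlt
  exact hs (mem_biUnion (pos_iff_ne_zero.2 hpos) ⟨rfl, hlt⟩)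

/-- With `J = {a > q | d(a) = d(q)}`, each `{q < |X| ≤ a}` with `a ∈ J` is null, and countably
many of them, together with the one for `max J` when it exists, cover `{|X| ∈ J}`. -/
lemma muI_setOf_distr_abs_eq (hX : Measurable X) {q : ℝ} (hq : distr α X q ≠ ∞) :
    muI α {s | q < |X s| ∧ distr α X |X s| = distr α X q} = 0 := by
  set J := {a | q < a ∧ distr α X a = distr α X q}
  have hnull : ∀ a ∈ J, muI α {s | q < |X s| ∧ |X s| ≤ a} = 0 := by
    rintro a ⟨hqa, ha⟩
    have : {s | q < |X s| ∧ |X s| ≤ a} = {s | q < |X s|} \ {s | a < |X s|} := by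
      ext
      simp
    rw [this, measure_sdiff (show {s | a < |X s|} ⊆ {s | q < |X s|} from fun s hs => hqa.trans hs)
      (show MeasurableSet {s | a < |X s|} from hX.abs measurableSet_Ioi).nullMeasurableSet
      (show distr α X a ≠ ∞ from ha ▸ hq)]
    exact tsub_eq_zero_of_le ha.ge
  have hcover : {s | q < |X s| ∧ distr α X |X s| = distr α X q} ⊆
      (⋃ p : {p : ℚ // ∃ a ∈ J, (p : ℝ) ≤ a}, {s | q < |X s| ∧ |X s| ≤ p}) ∪
        {s | |X s| ∈ J ∧ ∀ a ∈ J, a ≤ |X s|} := by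
    intro s hs
    by_cases h : ∃ a ∈ J, |X s| < a
    · obtain ⟨a, ha, hlt⟩ := h
      obtain ⟨p, hp1, hp2⟩ := exists_rat_btwn hlt
      exact Or.inl (mem_iUnion.2 ⟨⟨p, a, ha, hp2.le⟩, hs.1, hp1.le⟩)
    · exact Or.inr ⟨hs, fun a ha => not_lt.1 fun hlt => h ⟨a, ha, hlt⟩⟩
  refine measure_mono_null hcover (measure_union_null (measure_iUnion_null fun p =>
    measure_mono_null (fun s (hs : q < |X s| ∧ |X s| ≤ p) =>
      (⟨hs.1, hs.2.trans p.2.choose_spec.2⟩ : q < |X s| ∧ |X s| ≤ _))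
      (hnull _ p.2.choose_spec.1)) ?_)
  rcases eq_empty_or_nonempty {s | |X s| ∈ J ∧ ∀ a ∈ J, a ≤ |X s|} with h | ⟨s₀, hs₀J, hs₀⟩
  · rw [h, measure_empty]
  · exact measure_mono_null (fun s (hs : |X s| ∈ J ∧ ∀ a ∈ J, a ≤ |X s|) =>
      (⟨hs.1.1, hs₀ _ hs.1⟩ : q < |X s| ∧ |X s| ≤ _)) (hnull _ hs₀J)

lemma ae_distr_abs_lt (hX : Measurable X) (hdfin : ∀ lam, 0 < lam → distr α X lam ≠ ∞) :
    ∀ᵐ s ∂muI α, ∀ a, 0 < a → a < |X s| → distr α X |X s| < distr α X a := by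
  have hnull : muI α (⋃ q : {q : ℚ // 0 < (q : ℝ)},
      {s | (q : ℝ) < |X s| ∧ distr α X |X s| = distr α X q}) = 0 :=
    measure_iUnion_null fun q => muI_setOf_distr_abs_eq hX (hdfin _ q.2)
  filter_upwards [measure_eq_zero_iff_ae_notMem.1 hnull] with s hs a ha has
  refine lt_of_le_of_ne (distr_anti has.le) fun heq => hs ?_
  obtain ⟨q, hq1, hq2⟩ := exists_rat_btwn has
  exact mem_iUnion.2 ⟨⟨q, ha.trans hq1⟩, hq2,
    le_antisymm (distr_anti hq2.le) ((distr_anti hq1.le).trans heq.ge)⟩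

lemma ae_ryffMap_lt_distr (hX : Measurable X) (hdfin : ∀ lam, 0 < lam → distr α X lam ≠ ∞) :
    ∀ᵐ s ∂muI α, ∀ a, 0 < a → a < |X s| → ryffMap α X s < distr α X a := by
  filter_upwards [ae_levelRank_lt hX, ae_distr_abs_lt hX hdfin] with s hrank hdistr a ha has
  rcases eq_or_ne (muI α {u | |X u| = |X s|}) 0 with h0 | h0
  · calc ryffMap α X s = distr α X |X s| := by
          rw [ryffMap, levelRank, measure_mono_null inter_subset_left h0, add_zero]
      _ < distr α X a := hdistr a ha has
  · calc ryffMap α X s < distr α X |X s| + muI α {u | |X u| = |X s|} :=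
          ENNReal.add_lt_add_left (hdfin _ (ha.trans has)) (hrank h0)
      _ = muI α {u | |X s| ≤ |X u|} := (muI_le_abs hX _).symm
      _ ≤ distr α X a := measure_mono fun u hu => has.trans_le hu

lemma le_muI_le_abs (hX : Measurable X) (hdfin : ∀ lam, 0 < lam → distr α X lam ≠ ∞)
    {l : ℝ} (hl : 0 < l) {c : ℝ≥0∞} (h : ∀ μ, 0 < μ → μ < l → c ≤ distr α X μ) :
    c ≤ muI α {s | l ≤ |X s|} := by
  obtain ⟨u, hu_mono, hu_mem, hu_lim⟩ := exists_seq_strictMono_tendsto' hl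
  have hInter : {s | l ≤ |X s|} = ⋂ n, {s | u n < |X s|} := by
    ext s
    simp only [mem_ofPred_eq, mem_iInter]
    exact ⟨fun hs n => (hu_mem n).2.trans_le hs, fun hs => le_of_tendsto' hu_lim fun n => (hs n).le⟩
  rw [hInter, Antitone.measure_iInter (s := fun n => {s | u n < |X s|})
    (fun n m hnm s hs => (hu_mono.monotone hnm).trans_lt hs)
    (fun n => (hX.abs measurableSet_Ioi).nullMeasurableSet) ⟨0, hdfin _ (hu_mem 0).1⟩]
  exact le_iInf fun n => h _ (hu_mem n).1 (hu_mem n).2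

/-- Up to a null set, `{ryffMap < R}` contains every point above level `l`, and inside the level
set `{|X| = l}` it cuts out exactly the missing measure `R - d(l)`. -/
lemma muI_ryffMap_lt_of_level (hX : Measurable X) (hdfin : ∀ lam, 0 < lam → distr α X lam ≠ ∞)
    {l : ℝ} {R : ℝ≥0∞} (hl : 0 ≤ l) (hdl : distr α X l ≤ R) (hRl : R ≤ muI α {s | l ≤ |X s|}) :
    muI α {s | ryffMap α X s < R} = R := by
  set W := {s | ryffMap α X s < R}
  have hW : W = (W ∩ {s | l < |X s|}) ∪ (W ∩ {s | |X s| = l}) := by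
    ext s
    refine ⟨fun hs => ?_, fun hs => hs.elim (·.1) (·.1)⟩
    rcases lt_trichotomy l |X s| with h | h | h
    · exact Or.inl ⟨hs, h⟩
    · exact Or.inr ⟨hs, h.symm⟩
    · exact absurd hs (not_lt.2
        (hRl.trans ((measure_mono fun u hu => h.trans_le hu).trans distr_le_ryffMap)))
  have h1 : muI α (W ∩ {s | l < |X s|}) = distr α X l := by
    refine le_antisymm (measure_mono inter_subset_right) (measure_mono_ae ?_)
    filter_upwards [ae_ryffMap_lt_distr hX hdfin] with s hs hls
    obtain ⟨m, hlm, hm⟩ := exists_between (show l < |X s| from hls)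
    exact ⟨(hs m (hl.trans_lt hlm) hm).trans_le ((distr_anti hlm.le).trans hdl), hls⟩
  have h2 : muI α (W ∩ {s | |X s| = l}) = R - distr α X l := by
    have hrank : ∀ s, |X s| = l →
        ryffMap α X s = distr α X l + muI α ({u | |X u| = l} ∩ Iio s) := fun s hs => by
      rw [ryffMap, levelRank, hs]
    have : W ∩ {s | |X s| = l} =
        {s | |X s| = l} ∩ {s | muI α ({u | |X u| = l} ∩ Iio s) < R - distr α X l} := by
      ext s
      rw [mem_inter_iff, mem_inter_iff, and_comm]
      exact and_congr_right fun hs => by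
        rw [mem_ofPred_eq, mem_ofPred_eq, hrank s hs, lt_tsub_iff_left]
    rw [this, muI_inter_setOf_muI_inter_Iio_lt]
    rw [tsub_le_iff_left, ← muI_le_abs hX]
    exact hRl
  rw [hW, measure_union (disjoint_left.2 fun s h1 h2 => h1.2.ne' h2.2)
    (show MeasurableSet (W ∩ {s | |X s| = l}) from
      (measurable_ryffMap hX measurableSet_Iio).inter (hX.abs (measurableSet_singleton l))),
    h1, h2, add_tsub_cancel_of_le hdl]

lemma muI_ryffMap_lt (hX : Measurable X) (hdfin : ∀ lam, 0 < lam → distr α X lam ≠ ∞)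
    {r : ℝ} (hr : 0 < r) :
    muI α {s | ryffMap α X s < ENNReal.ofReal r} = min (ENNReal.ofReal r) α := by
  rcases lt_or_ge α (ENNReal.ofReal r) with hα | hα
  · rw [min_eq_right hα.le]
    refine (congrArg (muI α) (eq_univ_of_forall fun s => ?_)).trans muI_univ
    exact ((ryffMap_le hX).trans ((measure_mono (subset_univ _)).trans_eq muI_univ)).trans_lt hα
  rw [min_eq_left hα]
  have hne := rearrSet_nonempty (tendsto_distr_atTop hX.aemeasurable (hdfin 1 one_pos)) hr
  refine muI_ryffMap_lt_of_level hX hdfin (rearr_nonneg X r) (distr_le_of_rearr_le hne le_rfl) ?_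
  rcases (rearr_nonneg X r).eq_or_lt with h0 | hpos
  · rw [← h0]
    simpa [muI_univ] using hα
  · exact le_muI_le_abs hX hdfin hpos fun μ hμ hμl => ((lt_rearr_iff hne hμ).1 hμl).le

lemma muI_ryffMap_preimage (hX : Measurable X) (hdfin : ∀ lam, 0 < lam → distr α X lam ≠ ∞)
    {G : Set ℝ} (hG : MeasurableSet G) :
    muI α {s | ryffMap α X s ≠ ∞ ∧ (ryffMap α X s).toReal ∈ G} = muI α G := by
  have hmeas : Measurable fun s => (ryffMap α X s).toReal :=
    (measurable_ryffMap hX).ennreal_toReal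
  have hmap : ((muI α).restrict {s | ryffMap α X s ≠ ∞}).map (fun s => (ryffMap α X s).toReal)
      = muI α := by
    refine (Measure.ext_of_Iio_of_ne_top (fun r => ?_) fun r => ?_).symm
    · rw [muI_Iio]
      exact (min_lt_of_left_lt ENNReal.ofReal_lt_top).ne
    rw [Measure.map_apply hmeas measurableSet_Iio,
      Measure.restrict_apply (hmeas measurableSet_Iio), muI_Iio]
    rcases le_or_gt r 0 with hr | hr
    · rw [ENNReal.ofReal_of_nonpos hr, min_eq_left zero_le]
      exact (measure_mono_null (fun s hs => absurd (hs.1 : (ryffMap α X s).toReal < r)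
        (not_lt.2 (hr.trans ENNReal.toReal_nonneg))) measure_empty).symm
    · rw [← muI_ryffMap_lt hX hdfin hr]
      congr 1
      ext s
      simp only [mem_inter_iff, mem_preimage, mem_Iio, mem_ofPred_eq]
      exact ⟨fun h => ⟨(ENNReal.lt_ofReal_iff_toReal_lt h.ne_top).1 h, h.ne_top⟩,
        fun h => (ENNReal.lt_ofReal_iff_toReal_lt h.2).2 h.1⟩
  rw [← hmap, Measure.map_apply hmeas hG, Measure.restrict_apply (hmeas hG)]
  congr 1
  ext s
  simp [and_comm]

lemma ae_abs_eq_rearr_ryffMap (hX : Measurable X) (hdfin : ∀ lam, 0 < lam → distr α X lam ≠ ∞) :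
    ∀ᵐ s ∂muI α, |X s| = if ryffMap α X s = ∞ then 0 else rearr α X (ryffMap α X s).toReal := by
  filter_upwards [ae_ryffMap_lt_distr hX hdfin] with s hs
  split_ifs with htop
  · by_contra h
    exact ryffMap_ne_top hdfin ((abs_nonneg _).lt_of_ne' h) htop
  have hofReal : ENNReal.ofReal (ryffMap α X s).toReal = ryffMap α X s := ENNReal.ofReal_toReal htop
  have hle : distr α X |X s| ≤ ENNReal.ofReal (ryffMap α X s).toReal :=
    by rw [hofReal]; exact distr_le_ryffMap
  rcases (abs_nonneg (X s)).eq_or_lt with h0 | hpos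
  · rw [← h0] at hle ⊢
    exact (rearr_eq_zero_of_distr_le hle).symm
  refine le_antisymm (le_of_forall_lt_imp_le_of_dense fun a ha => ?_) (rearr_le_of_distr_le hpos hle)
  rcases le_or_gt a 0 with ha0 | ha0
  · exact ha0.trans (rearr_nonneg _ _)
  · refine ((lt_rearr_iff ⟨_, hpos, hle⟩ ha0).2 ?_).le
    rw [hofReal]
    exact hs a ha0 ha

end Ryff

section RyffLift

variable {X : ℝ → ℝ}

/-- The value `0` where `ryffMap = ∞` is the right one: those points have `X = 0`. -/
def ryffLift (α : ℝ≥0∞) (X h : ℝ → ℝ) (s : ℝ) : ℝ :=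
  (if X s < 0 then -1 else 1) * if ryffMap α X s = ∞ then 0 else h (ryffMap α X s).toReal

lemma abs_ryffLift (h : ℝ → ℝ) (s : ℝ) :
    |ryffLift α X h s| = if ryffMap α X s = ∞ then 0 else |h (ryffMap α X s).toReal| := by
  unfold ryffLift
  split_ifs <;> simp

lemma measurable_ryffLift (hX : Measurable X) {h : ℝ → ℝ} (hh : Measurable h) :
    Measurable (ryffLift α X h) :=
  (Measurable.ite (hX measurableSet_Iio) measurable_const measurable_const).mul
    (Measurable.ite (measurable_ryffMap hX (measurableSet_singleton ∞)) measurable_const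
      (hh.comp (measurable_ryffMap hX).ennreal_toReal))

lemma ryffLift_sub (h k : ℝ → ℝ) :
    ryffLift α X h - ryffLift α X k = ryffLift α X (h - k) := by
  funext s
  simp only [ryffLift, Pi.sub_apply]
  split_ifs <;> ring

lemma muI_abs_ryffLift_mem (hX : Measurable X) (hdfin : ∀ lam, 0 < lam → distr α X lam ≠ ∞)
    {h : ℝ → ℝ} (hh : Measurable h) {B : Set ℝ} (hB : MeasurableSet B) (h0 : (0 : ℝ) ∉ B) :
    muI α {s | |ryffLift α X h s| ∈ B} = muI α {u | |h u| ∈ B} := by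
  rw [← muI_ryffMap_preimage hX hdfin (show MeasurableSet {u | |h u| ∈ B} from hh.abs hB)]
  congr 1
  ext s
  simp only [mem_ofPred_eq, abs_ryffLift]
  split_ifs with htop <;> simp [htop, h0]

lemma distr_ryffLift (hX : Measurable X) (hdfin : ∀ lam, 0 < lam → distr α X lam ≠ ∞)
    {h : ℝ → ℝ} (hh : Measurable h) : distr α (ryffLift α X h) = distr α h := by
  funext lam
  rcases lt_or_ge lam 0 with hl | hl
  · rw [distr_of_neg hl, distr_of_neg hl]
  · exact muI_abs_ryffLift_mem hX hdfin hh measurableSet_Ioi (not_lt.2 hl)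

lemma ryffLift_rearr_ae_eq (hX : Measurable X) (hdfin : ∀ lam, 0 < lam → distr α X lam ≠ ∞) :
    ryffLift α X (rearr α X) =ᵐ[muI α] X := by
  filter_upwards [ae_abs_eq_rearr_ryffMap hX hdfin] with s hs
  rw [ryffLift, ← hs]
  split_ifs with h
  · rw [abs_of_neg h]; ring
  · rw [abs_of_nonneg (not_lt.1 h)]; ring

lemma tendstoInMeasure_ryffLift (hX : Measurable X)
    (hdfin : ∀ lam, 0 < lam → distr α X lam ≠ ∞) {h : ℕ → ℝ → ℝ} {k : ℝ → ℝ}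
    (hh : ∀ n, Measurable (h n)) (hk : Measurable k) (hconv : TendstoInMeasure (muI α) h atTop k) :
    TendstoInMeasure (muI α) (fun n => ryffLift α X (h n)) atTop (ryffLift α X k) := by
  rw [tendstoInMeasure_iff_dist] at hconv ⊢
  intro ε hε
  refine (hconv ε hε).congr fun n => ?_
  have := muI_abs_ryffLift_mem hX hdfin ((hh n).sub hk) measurableSet_Ici (not_le.2 hε)
  simp only [← ryffLift_sub, Pi.sub_apply, mem_Ici] at this
  simpa only [Real.dist_eq] using this.symm

end RyffLift

namespace SymmetricBFS

variable (E : SymmetricBFS α) {x : ℝ → ℝ}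

lemma sub_mem {y : ℝ → ℝ} (hx : E.Mem x) (hy : E.Mem y) : E.Mem (x - y) := by
  simpa [sub_eq_add_neg] using E.add_mem hx (E.smul_mem (-1) hy)

/-- Lifting along Ryff's map turns a sequence approaching `x*` into one approaching `x`, with the
same distributions of the terms and of the differences. -/
lemma isHgPoint_rearr (hx : E.Mem x) (hdfin : ∀ lam, 0 < lam → distr α x lam ≠ ∞)
    (hHg : E.IsHgPoint x) : E.IsHgPoint (rearr α x) := by
  intro v hv hconv hnorm
  set x₀ := (E.mem_aemeasurable hx).mk x
  have hx₀ : Measurable x₀ := (E.mem_aemeasurable hx).measurable_mk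
  have hxx₀ : x =ᵐ[muI α] x₀ := (E.mem_aemeasurable hx).ae_eq_mk
  have hrearr : rearr α x = rearr α x₀ := rearr_congr (distr_congr_ae hxx₀)
  have hdfin₀ : ∀ lam, 0 < lam → distr α x₀ lam ≠ ∞ := distr_congr_ae hxx₀ ▸ hdfin
  set v₀ := fun n => (E.mem_aemeasurable (hv n)).mk (v n)
  have hv₀ : ∀ n, Measurable (v₀ n) := fun n => (E.mem_aemeasurable (hv n)).measurable_mk
  have hvv₀ : ∀ n, v n =ᵐ[muI α] v₀ n := fun n => (E.mem_aemeasurable (hv n)).ae_eq_mk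
  set Y := fun n => ryffLift α x₀ (v₀ n)
  have hY : ∀ n, E.Mem (Y n) ∧ E.N (Y n) = E.N (v n) := fun n =>
    E.symmetric (measurable_ryffLift hx₀ (hv₀ n)).aemeasurable (hv n)
      ((distr_ryffLift hx₀ hdfin₀ (hv₀ n)).trans (distr_congr_ae (hvv₀ n)).symm)
  have hYconv : TendstoInMeasure (muI α) Y atTop x :=
    (tendstoInMeasure_ryffLift hx₀ hdfin₀ hv₀ (measurable_rearr x₀)
      (hrearr ▸ hconv.congr_left hvv₀)).congr_right
      ((ryffLift_rearr_ae_eq hx₀ hdfin₀).trans hxx₀.symm)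
  have hYnorm : Tendsto (fun n => E.N (Y n)) atTop (𝓝 (E.N x)) := by
    simpa only [(hY _).2, (E.mem_rearr hx).2] using hnorm
  refine (hHg Y (fun n => (hY n).1) hYconv hYnorm).congr fun n => ?_
  have hdiff : Y n - x =ᵐ[muI α] ryffLift α x₀ (v₀ n - rearr α x₀) := by
    rw [← ryffLift_sub]
    filter_upwards [hxx₀, ryffLift_rearr_ae_eq hx₀ hdfin₀] with s h1 h2
    simp only [Pi.sub_apply, Y, h1, h2]
  refine (E.symmetric ((E.mem_aemeasurable (hv n)).sub (measurable_rearr x).aemeasurable)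
    (E.sub_mem (hY n).1 hx) ?_).2.symm
  rw [distr_congr_ae hdiff, distr_ryffLift hx₀ hdfin₀ ((hv₀ n).sub (measurable_rearr x₀)), hrearr]
  exact distr_congr_ae ((hvv₀ n).sub (ae_eq_refl _))

end SymmetricBFS

theorem lkm_and_hg_implies_maxf_convergence_general (α : ℝ≥0∞)
    (E : SymmetricBFS α) (x : ℝ → ℝ) (hx : E.Mem x)
    (hinf : rearrInftyZero α x)
    (hLKM : E.IsLKMPoint x) (hHg : E.IsHgPoint x) :
    ∀ u : ℕ → ℝ → ℝ, (∀ n, E.Mem (u n)) →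
      TendstoInMeasure (muI α) (fun n => maxf α (u n)) atTop (maxf α x) →
      Tendsto (fun n => E.N (u n)) atTop (𝓝 (E.N x)) →
      Tendsto (fun n => E.N (rearr α (u n) - rearr α x)) atTop (𝓝 0) := by
  intro u hu hmaxf hnorm
  have hnorm' : Tendsto (fun n => E.N (rearr α (u n))) atTop (𝓝 (E.N (rearr α x))) := by
    simpa only [(E.mem_rearr (hu _)).2, (E.mem_rearr hx).2] using hnorm
  by_cases h0 : rearr α x = 0
  · simpa [h0, E.norm_zero'] using hnorm'
  have hHg' := E.isHgPoint_rearr hx (fun lam hl =>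
    distr_ne_top_of_rearrInftyZero (E.tendsto_distr hx) hinf hl) hHg
  refine tendsto_of_subseq_tendsto fun ns hns => ?_
  obtain ⟨ms, hms_mono, hms⟩ := (hmaxf.comp hns).exists_seq_tendsto_ae
  exact ⟨ms, hHg' _ (fun n => (E.mem_rearr (hu _)).1)
    (E.tendstoInMeasure_rearr_of_ae_tendsto_maxf hx hinf hLKM h0 (fun n => hu _) hms)
    (hnorm'.comp (hns.comp hms_mono.tendsto_atTop))⟩

/-- If `x*(∞) = 0` and `x` is an `LKM` point and an `H_g` point, then for
every sequence with `x_n** → x**` in measure and `‖x_n‖_E → ‖x‖_E` one has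
`‖x_n* − x*‖_E → 0`. -/
theorem lkm_and_hg_implies_maxf_convergence (α : ℝ≥0∞) (hα : α = 1 ∨ α = ∞)
    (E : SymmetricBFS α) (x : ℝ → ℝ) (hx : E.Mem x)
    (hinf : rearrInftyZero α x)
    (hLKM : E.IsLKMPoint x) (hHg : E.IsHgPoint x) :
    ∀ u : ℕ → ℝ → ℝ, (∀ n, E.Mem (u n)) →
      TendstoInMeasure (muI α) (fun n => maxf α (u n)) atTop (maxf α x) →
      Tendsto (fun n => E.N (u n)) atTop (𝓝 (E.N x)) →
      Tendsto (fun n => E.N (rearr α (u n) - rearr α x)) atTop (𝓝 0) :=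
  lkm_and_hg_implies_maxf_convergence_general α E x hx hinf hLKM hHg
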